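/- The full F2SIE round map decrypts with zero error: for any positive integers M, N, any row shift amounts r : Fin M → ℤ, any column shift amounts c : Fin N → ℤ, and any key matrix K : Fin M → Fin N → BitVec 8, the encryption map E defined as the composition (negative-feedback diffusion with key K) ∘ (positive-feedback diffusion with key K) ∘ (column cyclic shift by c) ∘ (row cyclic shift by r) is a bijection on the set of images Fin M → Fin N → BitVec 8; hence there exists a decryption map D with D(E(P)) = P for every image P, i.e. every encrypted image is decrypted with zero error. -/

import Mathlib

/-- Row cyclic shift (replacement step (5)): `P^{sr}(i, j) = P(i, j - r(i) mod N)`. -/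
def rowShift (M N : ℕ) [NeZero N] (r : Fin M → ℤ)
    (P : Fin M → Fin N → BitVec 8) : Fin M → Fin N → BitVec 8 :=
  fun i j => P i (j - (open Fin.CommRing in (r i : Fin N)))

/-- Column cyclic shift (replacement step (6)): `P^{sc}(i, j) = P(i - c(j) mod M, j)`. -/
def colShift (M N : ℕ) [NeZero M] (c : Fin N → ℤ)
    (P : Fin M → Fin N → BitVec 8) : Fin M → Fin N → BitVec 8 :=
  fun i j => P (i - (open Fin.CommRing in (c j : Fin M))) j

/-- Positive-feedback diffusion (8), traversing pixels in raster order: the first pixel becomes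
`(P ^^^ K) + K`, every other pixel becomes `((P ^^^ K) + K(prev)) ^^^ P(prev)` with `prev` the
raster-order predecessor. -/
def posDiffuse (M N : ℕ) (K : Fin M → Fin N → BitVec 8)
    (P : Fin M → Fin N → BitVec 8) : Fin M → Fin N → BitVec 8 :=
  fun i j =>
    let t : Fin (M * N) := finProdFinEquiv (i, j)
    if (t : ℕ) = 0 then
      (P i j ^^^ K i j) + K i j
    else
      let p := finProdFinEquiv.symm (⟨(t : ℕ) - 1, by have := t.isLt; omega⟩ : Fin (M * N))
      ((P i j ^^^ K i j) + K p.1 p.2) ^^^ P p.1 p.2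

/-- Negative-feedback diffusion (9): the same formula in reverse raster order, with `prev`
replaced by the raster-order successor. -/
def negDiffuse (M N : ℕ) (K : Fin M → Fin N → BitVec 8)
    (P : Fin M → Fin N → BitVec 8) : Fin M → Fin N → BitVec 8 :=
  fun i j =>
    let t : Fin (M * N) := finProdFinEquiv (i, j)
    if h : (t : ℕ) = M * N - 1 then
      (P i j ^^^ K i j) + K i j
    else
      let p := finProdFinEquiv.symm (⟨(t : ℕ) + 1, by have := t.isLt; omega⟩ : Fin (M * N))
      ((P i j ^^^ K i j) + K p.1 p.2) ^^^ P p.1 p.2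

instance : Finite (BitVec 8) := Finite.of_injective _ BitVec.toFin_injective

lemma bv_cancel (x y k a b : BitVec 8)
    (h : ((x ^^^ k) + a) ^^^ b = ((y ^^^ k) + a) ^^^ b) : x = y := by
  have h1 : (x ^^^ k) + a = (y ^^^ k) + a := by
    have := congrArg (· ^^^ b) h
    simpa [BitVec.xor_assoc] using this
  have h2 : x ^^^ k = y ^^^ k := add_right_cancel h1
  have := congrArg (· ^^^ k) h2
  simpa [BitVec.xor_assoc] using this

lemma bv_cancel0 (x y k : BitVec 8) (h : (x ^^^ k) + k = (y ^^^ k) + k) : x = y := by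
  have h2 : x ^^^ k = y ^^^ k := add_right_cancel h
  have := congrArg (· ^^^ k) h2
  simpa [BitVec.xor_assoc] using this

lemma rowShift_inj (M N : ℕ) [NeZero N] (r : Fin M → ℤ) :
    Function.Injective (rowShift M N r) := by
  intro P Q h
  funext i j
  have := congrFun (congrFun h i) (j + (open Fin.CommRing in (r i : Fin N)))
  simpa [rowShift] using this

lemma colShift_inj (M N : ℕ) [NeZero M] (c : Fin N → ℤ) :
    Function.Injective (colShift M N c) := by
  intro P Q h
  funext i j
  have := congrFun (congrFun h (i + (open Fin.CommRing in (c j : Fin M)))) j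
  simpa [colShift] using this

lemma posDiffuse_inj (M N : ℕ) (K : Fin M → Fin N → BitVec 8) :
    Function.Injective (posDiffuse M N K) := by
  intro P Q h
  have key : ∀ n : ℕ, ∀ t : Fin (M * N), (t : ℕ) = n →
      P (finProdFinEquiv.symm t).1 (finProdFinEquiv.symm t).2 =
      Q (finProdFinEquiv.symm t).1 (finProdFinEquiv.symm t).2 := by
    intro n
    induction n using Nat.strong_induction_on with
    | _ n ih =>
      intro t ht
      obtain ⟨i, j, hij⟩ : ∃ i j, finProdFinEquiv.symm t = (i, j) :=
        ⟨_, _, rfl⟩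
      have ht' : finProdFinEquiv (i, j) = t := by
        rw [← hij]; exact Equiv.apply_symm_apply _ _
      have h' := congrFun (congrFun h i) j
      simp only [posDiffuse] at h'
      simp only [ht'] at h'
      rw [hij]
      by_cases h0 : (t : ℕ) = 0
      · simp only [if_pos h0] at h'
        exact bv_cancel0 _ _ _ h'
      · simp only [if_neg h0] at h'
        set s : Fin (M * N) := ⟨(t : ℕ) - 1, by have := t.isLt; omega⟩ with hs
        have hp : P (finProdFinEquiv.symm s).1 (finProdFinEquiv.symm s).2 =
            Q (finProdFinEquiv.symm s).1 (finProdFinEquiv.symm s).2 :=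
          ih ((t : ℕ) - 1) (by omega) s rfl
        rw [hp] at h'
        exact bv_cancel _ _ _ _ _ h'
  funext i j
  have := key ((finProdFinEquiv (i, j) : Fin (M * N)) : ℕ) (finProdFinEquiv (i, j)) rfl
  simpa using this

lemma negDiffuse_inj (M N : ℕ) (K : Fin M → Fin N → BitVec 8) :
    Function.Injective (negDiffuse M N K) := by
  intro P Q h
  have key : ∀ n : ℕ, ∀ t : Fin (M * N), M * N - 1 - (t : ℕ) = n →
      P (finProdFinEquiv.symm t).1 (finProdFinEquiv.symm t).2 =
      Q (finProdFinEquiv.symm t).1 (finProdFinEquiv.symm t).2 := by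
    intro n
    induction n using Nat.strong_induction_on with
    | _ n ih =>
      intro t ht
      obtain ⟨i, j, hij⟩ : ∃ i j, finProdFinEquiv.symm t = (i, j) :=
        ⟨_, _, rfl⟩
      have ht' : finProdFinEquiv (i, j) = t := by
        rw [← hij]; exact Equiv.apply_symm_apply _ _
      have h' := congrFun (congrFun h i) j
      simp only [negDiffuse] at h'
      simp only [ht'] at h'
      rw [hij]
      by_cases h0 : (t : ℕ) = M * N - 1
      · simp only [dif_pos h0] at h'
        exact bv_cancel0 _ _ _ h'
      · simp only [dif_neg h0] at h'
        set s : Fin (M * N) := ⟨(t : ℕ) + 1, by have := t.isLt; omega⟩ with hs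
        have hp : P (finProdFinEquiv.symm s).1 (finProdFinEquiv.symm s).2 =
            Q (finProdFinEquiv.symm s).1 (finProdFinEquiv.symm s).2 :=
          ih (M * N - 1 - ((t : ℕ) + 1)) (by have := t.isLt; omega) s rfl
        rw [hp] at h'
        exact bv_cancel _ _ _ _ _ h'
  funext i j
  have := key (M * N - 1 - ((finProdFinEquiv (i, j) : Fin (M * N)) : ℕ))
    (finProdFinEquiv (i, j)) rfl
  simpa using this

/-- **The full F2SIE round map decrypts with zero error**: for any row shifts `r`, column shifts
`c` and key matrix `K`, the encryption map
`E = negDiffuse ∘ posDiffuse ∘ colShift ∘ rowShift` is a bijection on images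
`Fin M → Fin N → BitVec 8`; hence there is a decryption map `Dec` with `Dec (E P) = P` for
every image `P`. -/
theorem f2sie_round_decrypts_exactly (M N : ℕ) [NeZero M] [NeZero N]
    (r : Fin M → ℤ) (c : Fin N → ℤ) (K : Fin M → Fin N → BitVec 8) :
    Function.Bijective
      (negDiffuse M N K ∘ posDiffuse M N K ∘ colShift M N c ∘ rowShift M N r) ∧
    ∃ Dec : (Fin M → Fin N → BitVec 8) → (Fin M → Fin N → BitVec 8),
      ∀ P : Fin M → Fin N → BitVec 8,
        Dec ((negDiffuse M N K ∘ posDiffuse M N K ∘ colShift M N c ∘ rowShift M N r) P) = P := by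
  have hinj : Function.Injective
      (negDiffuse M N K ∘ posDiffuse M N K ∘ colShift M N c ∘ rowShift M N r) :=
    (negDiffuse_inj M N K).comp ((posDiffuse_inj M N K).comp
      ((colShift_inj M N c).comp (rowShift_inj M N r)))
  have hb : Function.Bijective
      (negDiffuse M N K ∘ posDiffuse M N K ∘ colShift M N c ∘ rowShift M N r) :=
    Finite.injective_iff_bijective.mp hinj
  exact ⟨hb, Function.surjInv hb.2, fun P => Function.leftInverse_surjInv hb P⟩
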